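/- arXiv:2202.00600 — 2 statements merged into one kernel-verified Lean document; each statement's English description precedes it below -/
import Mathlib

section
/- Let ψ₀ be a SIC fiducial vector in odd dimension d and let P_θ be the associated generalised parity operator. Then P_θ is Hermitian, P_θ² = 1_d, and Tr(P_θ) = 1; consequently P_θ has eigenvalues ±1, the eigenspace for eigenvalue +1 has dimension (d+1)/2, and the eigenspace for eigenvalue −1 has dimension (d−1)/2. -/
open Matrix Complex

/-- `τ = -exp(iπ/d)`. -/
noncomputable def tau (d : ℕ) : ℂ := -Complex.exp (Real.pi * Complex.I / d)

/-- The displacement operator `D_p = D_{i,j}`, with `(r,s)` entry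
`τ^{ij+2js} δ_{r,s+i}` (exponents of the `d`-th root of unity `τ` taken mod `d`). -/
noncomputable def Disp (d : ℕ) [NeZero d] (p : ZMod d × ZMod d) :
    Matrix (ZMod d) (ZMod d) ℂ :=
  Matrix.of fun r s =>
    tau d ^ ((p.1 * p.2 + 2 * p.2 * s).val) * (if r = s + p.1 then 1 else 0)

/-- The standard Hermitian inner product `⟨x, y⟩`, antilinear in the first slot. -/
noncomputable def cInner {n : Type*} [Fintype n] (x y : n → ℂ) : ℂ :=
  ∑ k, star (x k) * y k

/-- `Hp = (i, 2⁻¹j)` for `p = (i,j)`. -/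
def Hmap (d : ℕ) [NeZero d] (p : ZMod d × ZMod d) : ZMod d × ZMod d :=
  (p.1, (2 : ZMod d)⁻¹ * p.2)

/-- The squared SIC overlap phase `e^{2iθ_q}`. -/
noncomputable def sqPhase (d : ℕ) [NeZero d] (ψ₀ : ZMod d → ℂ)
    (q : ZMod d × ZMod d) : ℂ :=
  if q = 0 then 1 else ((d : ℂ) + 1) * (cInner ψ₀ ((Disp d q).mulVec ψ₀)) ^ 2

/-- The generalised parity operator `P_θ = (1/d)·Σ_p e^{2iθ_{Hp}} D_{-p}`. -/
noncomputable def genParity (d : ℕ) [NeZero d] (ψ₀ : ZMod d → ℂ) :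
    Matrix (ZMod d) (ZMod d) ℂ :=
  ((d : ℂ)⁻¹) • ∑ p : ZMod d × ZMod d, sqPhase d ψ₀ (Hmap d p) • Disp d (-p)

/-!
Write `f q = ⟨ψ₀, D_q ψ₀⟩` (`overlap`) and let `V` (`pairMatrix`) be the `d × d` matrix
`V r c = ψ₀(r + c) ψ₀(r - c)`. Since `e^{2iθ_q} = (d + 1) f_q² - d δ_{q,0}`, summing the
characters occurring in `f_{Hp}² D_{-p}` over the second coordinate of `p` gives
`P_θ = (d + 1) V Vᴴ - 1`, a Hermitian matrix. The Gram matrix `Vᴴ V` is a Fourier transform of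
`|f_q|²` in the second coordinate of `q`, so the SIC condition `|f_q|² = 1/(d + 1)` for `q ≠ 0`
makes it `(1 + Π)/(d + 1)`, where `Π a b = δ_{a+b,0}` is the parity matrix. As `V Π = V`, this
gives `(V Vᴴ)² = 2/(d + 1) · V Vᴴ` and `tr (V Vᴴ) = (d + tr Π)/(d + 1) = 1`, hence `P_θ² = 1`
and `tr P_θ = 1`. For an involution, `(1 + P_θ)/2` projects onto the `+1` eigenspace along the
`-1` eigenspace, so the two dimensions add up to `d` and the first one is `(d + tr P_θ)/2`.
-/

namespace Module.End

open LinearMap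

variable {K V : Type*} [Field K] [AddCommGroup V] [Module K V] {f : End K V}

theorem isIdempotentElem_inv_two_smul_one_add (h2 : (2 : K) ≠ 0) (hf : f * f = 1) :
    IsIdempotentElem ((2⁻¹ : K) • (1 + f)) := by
  rw [IsIdempotentElem, smul_mul_smul_comm, add_mul, one_mul, mul_add, mul_one, hf,
    show 1 + f + (f + 1) = (2 : K) • (1 + f) by module, smul_smul]
  congr 1
  field_simp

theorem ker_inv_two_smul_one_add (h2 : (2 : K) ≠ 0) :
    ker ((2⁻¹ : K) • (1 + f)) = eigenspace f (-1) := by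
  ext x
  rw [mem_ker, mem_eigenspace_iff, LinearMap.smul_apply, smul_eq_zero, LinearMap.add_apply,
    one_apply, add_eq_zero_iff_eq_neg', neg_one_smul]
  simp [h2]

theorem range_inv_two_smul_one_add (h2 : (2 : K) ≠ 0) (hf : f * f = 1) :
    range ((2⁻¹ : K) • (1 + f)) = eigenspace f 1 := by
  ext x
  rw [(isIdempotentElem_inv_two_smul_one_add h2 hf).mem_range_iff, mem_eigenspace_iff, one_smul,
    LinearMap.smul_apply, LinearMap.add_apply, one_apply, inv_smul_eq_iff₀ h2, two_smul,
    add_right_inj]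

variable [FiniteDimensional K V]

theorem finrank_eigenspace_one_add_finrank_eigenspace_neg_one (h2 : (2 : K) ≠ 0)
    (hf : f * f = 1) :
    finrank K (eigenspace f 1) + finrank K (eigenspace f (-1)) = finrank K V := by
  rw [← range_inv_two_smul_one_add h2 hf, ← ker_inv_two_smul_one_add h2]
  exact Submodule.finrank_add_eq_of_isCompl (isIdempotentElem_inv_two_smul_one_add h2 hf).isCompl

theorem two_mul_finrank_eigenspace_one (h2 : (2 : K) ≠ 0) (hf : f * f = 1) :
    2 * (finrank K (eigenspace f 1) : K) = finrank K V + trace K V f := by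
  have h := (isIdempotentElem_inv_two_smul_one_add h2 hf).isProj_range.trace
  rw [range_inv_two_smul_one_add h2 hf, map_smul, map_add, trace_one, smul_eq_mul] at h
  rw [← h, ← mul_assoc, mul_inv_cancel₀ h2, one_mul]

end Module.End

local notation "𝕖" => ZMod.stdAddChar

variable {d : ℕ}

namespace ZMod

theorem two_mul_add_one_eq_one {k : ℕ} (hk : d = 2 * k + 1) :
    (2 : ZMod d) * (k + 1) = 1 := by
  have h : ((2 * k + 1 : ℕ) : ZMod d) = 0 := hk ▸ ZMod.natCast_self d
  push_cast at h
  linear_combination h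

theorem inv_two_eq {k : ℕ} (hk : d = 2 * k + 1) : (2 : ZMod d)⁻¹ = k + 1 :=
  ZMod.inv_eq_of_mul_eq_one _ _ _ (two_mul_add_one_eq_one hk)

theorem two_mul_inv_two_of_odd (hodd : Odd d) : (2 : ZMod d) * 2⁻¹ = 1 := by
  obtain ⟨k, hk⟩ := hodd
  rw [inv_two_eq hk]
  exact two_mul_add_one_eq_one hk

theorem add_self_eq_zero_iff_of_odd (hodd : Odd d) {a : ZMod d} : a + a = 0 ↔ a = 0 := by
  refine ⟨fun h => ?_, fun h => by rw [h, add_zero]⟩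
  linear_combination (2⁻¹ : ZMod d) * h - a * two_mul_inv_two_of_odd hodd

variable [NeZero d]

theorem sum_stdAddChar_mul (t : ZMod d) :
    ∑ j : ZMod d, 𝕖 (j * t) = if t = 0 then (d : ℂ) else 0 := by
  rw [AddChar.sum_mulShift t (ZMod.isPrimitive_stdAddChar d), ZMod.card, Nat.cast_ite,
    Nat.cast_zero]

theorem star_stdAddChar (x : ZMod d) : star (𝕖 x) = 𝕖 (-x) := by
  rw [AddChar.map_neg_eq_inv, AddChar.inv_apply_eq_conj]
  rfl

theorem sum_sum_sum_mul_stdAddChar_mul_sub (F : ZMod d → ZMod d → ℂ) (c : ZMod d → ZMod d) :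
    ∑ j, ∑ x, ∑ y, F x y * 𝕖 (j * (y - c x)) = d * ∑ x, F x (c x) := by
  rw [Finset.sum_comm]
  simp_rw [Finset.mul_sum]
  refine Finset.sum_congr rfl fun x _ => ?_
  rw [Finset.sum_comm]
  simp only [← Finset.mul_sum, sum_stdAddChar_mul, sub_eq_zero, mul_ite, mul_zero,
    Finset.sum_ite_eq', Finset.mem_univ, if_true]
  ring

end ZMod

variable [NeZero d]

theorem tau_eq_stdAddChar (hodd : Odd d) : tau d = 𝕖 (2⁻¹ : ZMod d) := by
  obtain ⟨k, hk⟩ := hodd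
  have hd : (d : ℂ) ≠ 0 := Nat.cast_ne_zero.mpr (NeZero.ne d)
  have harg : 2 * Real.pi * I * ((k + 1 : ℤ) : ℂ) / d = Real.pi * I + Real.pi * I / d := by
    field_simp
    rw [hk]
    push_cast
    ring
  rw [ZMod.inv_two_eq hk, show ((k : ZMod d) + 1) = ((k + 1 : ℤ) : ZMod d) by
    push_cast; ring, ZMod.stdAddChar_coe, harg, exp_add, exp_pi_mul_I, tau, neg_one_mul]

theorem tau_pow_val (hodd : Odd d) (x : ZMod d) : tau d ^ x.val = 𝕖 (2⁻¹ * x) := by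
  rw [tau_eq_stdAddChar hodd, ← AddChar.map_nsmul_eq_pow, nsmul_eq_mul, ZMod.natCast_zmod_val,
    mul_comm]

theorem disp_apply (hodd : Odd d) (p : ZMod d × ZMod d) (r s : ZMod d) :
    Disp d p r s = 𝕖 (2⁻¹ * (p.1 * p.2) + p.2 * s) * if r = s + p.1 then 1 else 0 := by
  rw [Disp, of_apply, tau_pow_val hodd]
  congr 2
  linear_combination (p.2 * s) * ZMod.two_mul_inv_two_of_odd hodd

theorem disp_zero (hodd : Odd d) : Disp d 0 = 1 := by
  ext r s
  simp [disp_apply hodd, one_apply]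

theorem disp_mulVec_apply (hodd : Odd d) (q : ZMod d × ZMod d) (ψ : ZMod d → ℂ) (r : ZMod d) :
    (Disp d q *ᵥ ψ) r = 𝕖 (q.2 * r - 2⁻¹ * (q.1 * q.2)) * ψ (r - q.1) := by
  rw [mulVec, dotProduct, Finset.sum_eq_single (r - q.1)]
  · rw [disp_apply hodd, if_pos (by ring), mul_one]
    congr 2
    linear_combination (q.1 * q.2) * ZMod.two_mul_inv_two_of_odd hodd
  · intro s _ hs
    rw [disp_apply hodd, if_neg (fun h => hs (by rw [h]; ring)), mul_zero, zero_mul]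
  · simp

variable (d) in
def hmapEquiv (hodd : Odd d) : (ZMod d × ZMod d) ≃ ZMod d × ZMod d where
  toFun := Hmap d
  invFun u := (u.1, 2 * u.2)
  left_inv p := by
    simp only [Hmap]
    rw [← mul_assoc, ZMod.two_mul_inv_two_of_odd hodd, one_mul]
  right_inv u := by
    simp only [Hmap]
    rw [← mul_assoc, mul_comm (2⁻¹ : ZMod d), ZMod.two_mul_inv_two_of_odd hodd, one_mul]

theorem hmap_eq_zero_iff (hodd : Odd d) {p : ZMod d × ZMod d} : Hmap d p = 0 ↔ p = 0 :=
  (hmapEquiv d hodd).injective.eq_iff' (by simp [hmapEquiv, Hmap])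

noncomputable def overlap (ψ : ZMod d → ℂ) (q : ZMod d × ZMod d) : ℂ :=
  cInner ψ (Disp d q *ᵥ ψ)

noncomputable def pairMatrix (ψ : ZMod d → ℂ) : Matrix (ZMod d) (ZMod d) ℂ :=
  of fun r c => ψ (r + c) * ψ (r - c)

variable (d) in
noncomputable def parityMatrix : Matrix (ZMod d) (ZMod d) ℂ :=
  of fun a b => if a + b = 0 then 1 else 0

section

variable (ψ : ZMod d → ℂ)

theorem overlap_zero (hodd : Odd d) : overlap ψ 0 = cInner ψ ψ := by
  rw [overlap, disp_zero hodd, one_mulVec]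

theorem overlap_eq_sum (hodd : Odd d) (q : ZMod d × ZMod d) :
    overlap ψ q = ∑ r, star (ψ r) * ψ (r - q.1) * 𝕖 (q.2 * r - 2⁻¹ * (q.1 * q.2)) := by
  simp only [overlap, cInner, disp_mulVec_apply hodd]
  exact Finset.sum_congr rfl fun r _ => by ring

theorem star_overlap_mul_overlap (hodd : Odd d) (q : ZMod d × ZMod d) :
    star (overlap ψ q) * overlap ψ q =
      ∑ x, ∑ y, ψ x * star (ψ (x - q.1)) * (star (ψ y) * ψ (y - q.1)) *
        𝕖 (q.2 * (y - x)) := by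
  rw [overlap_eq_sum ψ hodd, star_sum, Finset.sum_mul_sum]
  refine Finset.sum_congr rfl fun x _ => Finset.sum_congr rfl fun y _ => ?_
  rw [star_mul', star_mul', star_star, ZMod.star_stdAddChar,
    show q.2 * (y - x) = -(q.2 * x - 2⁻¹ * (q.1 * q.2)) + (q.2 * y - 2⁻¹ * (q.1 * q.2)) by
      ring,
    AddChar.map_add_eq_mul]
  ring

theorem overlap_sq (hodd : Odd d) (q : ZMod d × ZMod d) :
    overlap ψ q ^ 2 =
      ∑ x, ∑ y, star (ψ x) * ψ (x - q.1) * (star (ψ y) * ψ (y - q.1)) *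
        𝕖 (q.2 * (x + y) - q.1 * q.2) := by
  rw [sq, overlap_eq_sum ψ hodd, Finset.sum_mul_sum]
  refine Finset.sum_congr rfl fun x _ => Finset.sum_congr rfl fun y _ => ?_
  rw [show q.2 * (x + y) - q.1 * q.2 =
      (q.2 * x - 2⁻¹ * (q.1 * q.2)) + (q.2 * y - 2⁻¹ * (q.1 * q.2)) by
    linear_combination (q.1 * q.2) * ZMod.two_mul_inv_two_of_odd hodd,
    AddChar.map_add_eq_mul]
  ring

theorem sum_norm_overlap_sq_mul_stdAddChar (hodd : Odd d) (a b : ZMod d) :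
    ∑ j, (‖overlap ψ (a - b, j)‖ : ℂ) ^ 2 * 𝕖 (j * -(a + b)) =
      d * ((pairMatrix ψ)ᴴ * pairMatrix ψ) a b := by
  have hj : ∀ j, (‖overlap ψ (a - b, j)‖ : ℂ) ^ 2 * 𝕖 (j * -(a + b)) =
      ∑ x, ∑ y, ψ x * star (ψ (x - (a - b))) * (star (ψ y) * ψ (y - (a - b))) *
        𝕖 (j * (y - (x + (a + b)))) := by
    intro j
    rw [← Complex.conj_mul', ← Complex.star_def, star_overlap_mul_overlap ψ hodd,
      Finset.sum_mul]
    refine Finset.sum_congr rfl fun x _ => ?_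
    rw [Finset.sum_mul]
    refine Finset.sum_congr rfl fun y _ => ?_
    rw [mul_assoc, ← AddChar.map_add_eq_mul]
    congr 2
    ring
  rw [Finset.sum_congr rfl fun j _ => hj j, ZMod.sum_sum_sum_mul_stdAddChar_mul_sub, mul_apply,
    ← Fintype.sum_equiv (Equiv.subRight b) _ _ fun _ => rfl]
  congr 1
  refine Finset.sum_congr rfl fun r _ => ?_
  simp only [Equiv.subRight_apply, conjTranspose_apply, pairMatrix, of_apply, star_mul']
  ring_nf

theorem pairMatrix_mul_parityMatrix : pairMatrix ψ * parityMatrix d = pairMatrix ψ := by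
  ext r b
  simp only [mul_apply, parityMatrix, of_apply, mul_ite, mul_one, mul_zero, add_eq_zero_iff_eq_neg,
    Finset.sum_ite_eq', Finset.mem_univ, if_true, pairMatrix]
  rw [sub_neg_eq_add, ← sub_eq_add_neg, mul_comm]

theorem trace_parityMatrix (hodd : Odd d) : (parityMatrix d).trace = 1 := by
  simp [trace, parityMatrix, ZMod.add_self_eq_zero_iff_of_odd hodd]

theorem sum_overlap_sq_smul_disp (hodd : Odd d) :
    ∑ p, overlap ψ (Hmap d p) ^ 2 • Disp d (-p) =
      (d : ℂ) • (pairMatrix ψ * (pairMatrix ψ)ᴴ) := by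
  rw [Fintype.sum_equiv (hmapEquiv d hodd) _
    (fun u => overlap ψ u ^ 2 • Disp d (-(u.1, 2 * u.2)))
    fun p => congrArg (fun q => overlap ψ (Hmap d p) ^ 2 • Disp d (-q))
      ((hmapEquiv d hodd).symm_apply_apply p).symm]
  ext r s
  simp only [Matrix.sum_apply, Matrix.smul_apply, smul_eq_mul, Fintype.sum_prod_type]
  rw [Finset.sum_eq_single (s - r) (fun u₁ _ hu => Finset.sum_eq_zero fun u₂ _ => by
    rw [disp_apply hodd, if_neg (fun h => hu (by simp only [Prod.fst_neg] at h; rw [h]; ring)),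
      mul_zero, mul_zero]) (by simp)]
  have hterm : ∀ j : ZMod d, overlap ψ (s - r, j) ^ 2 * Disp d (-(s - r, 2 * j)) r s =
      ∑ x, ∑ y, star (ψ x) * ψ (x - (s - r)) * (star (ψ y) * ψ (y - (s - r))) *
        𝕖 (j * (y - (2 * s - x))) := by
    intro j
    rw [disp_apply hodd, if_pos (by simp), mul_one, overlap_sq ψ hodd, Finset.sum_mul]
    refine Finset.sum_congr rfl fun x _ => ?_
    rw [Finset.sum_mul]
    refine Finset.sum_congr rfl fun y _ => ?_
    rw [mul_assoc, ← AddChar.map_add_eq_mul]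
    congr 2
    simp only [Prod.fst_neg, Prod.snd_neg]
    linear_combination ((s - r) * j) * ZMod.two_mul_inv_two_of_odd hodd
  rw [Finset.sum_congr rfl fun j _ => hterm j, ZMod.sum_sum_sum_mul_stdAddChar_mul_sub, mul_apply,
    ← Fintype.sum_equiv (Equiv.addLeft s) _ _ fun _ => rfl]
  congr 1
  refine Finset.sum_congr rfl fun c _ => ?_
  simp only [Equiv.coe_addLeft, conjTranspose_apply, pairMatrix, of_apply, star_mul']
  ring_nf

end

variable {ψ : ZMod d → ℂ}

theorem norm_overlap_sq_of_sic (hodd : Odd d) (hunit : cInner ψ ψ = 1)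
    (hsic : ∀ p : ZMod d × ZMod d, p ≠ 0 →
      ‖cInner ψ ((Disp d p).mulVec ψ)‖ ^ 2 = 1 / (d + 1)) (q : ZMod d × ZMod d) :
    (‖overlap ψ q‖ : ℂ) ^ 2 =
      ((d : ℂ) + 1)⁻¹ * (1 + if q = 0 then (d : ℂ) else 0) := by
  have hd : (d : ℂ) + 1 ≠ 0 := by exact_mod_cast Nat.succ_ne_zero d
  split_ifs with hq
  · rw [hq, overlap_zero ψ hodd, hunit, norm_one, Complex.ofReal_one, one_pow,
      add_comm 1, inv_mul_cancel₀ hd]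
  · rw [add_zero, mul_one, ← one_div, overlap, ← Complex.ofReal_pow, hsic q hq]
    push_cast
    rfl

theorem conjTranspose_pairMatrix_mul_pairMatrix_of_sic (hodd : Odd d) (hunit : cInner ψ ψ = 1)
    (hsic : ∀ p : ZMod d × ZMod d, p ≠ 0 →
      ‖cInner ψ ((Disp d p).mulVec ψ)‖ ^ 2 = 1 / (d + 1)) :
    (pairMatrix ψ)ᴴ * pairMatrix ψ = ((d : ℂ) + 1)⁻¹ • (1 + parityMatrix d) := by
  ext a b
  have hd : (d : ℂ) ≠ 0 := Nat.cast_ne_zero.mpr (NeZero.ne d)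
  refine mul_left_cancel₀ hd ?_
  rw [← sum_norm_overlap_sq_mul_stdAddChar ψ hodd]
  simp only [norm_overlap_sq_of_sic hodd hunit hsic, mul_add, add_mul, mul_one,
    Finset.sum_add_distrib, ← Finset.mul_sum, ZMod.sum_stdAddChar_mul]
  have hdiag : ∑ j, (((d : ℂ) + 1)⁻¹ * if (a - b, j) = 0 then (d : ℂ) else 0) *
      𝕖 (j * -(a + b)) = ((d : ℂ) + 1)⁻¹ * if a = b then (d : ℂ) else 0 := by
    rw [Finset.sum_eq_single 0 (fun j _ hj => by simp [hj]) (by simp)]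
    simp [sub_eq_zero]
  rw [hdiag]
  simp only [Matrix.smul_apply, Matrix.add_apply, one_apply, parityMatrix, of_apply, neg_eq_zero,
    smul_eq_mul]
  split_ifs <;> ring

theorem pairMatrix_mul_conjTranspose_mul_self_of_sic (hodd : Odd d) (hunit : cInner ψ ψ = 1)
    (hsic : ∀ p : ZMod d × ZMod d, p ≠ 0 →
      ‖cInner ψ ((Disp d p).mulVec ψ)‖ ^ 2 = 1 / (d + 1)) :
    pairMatrix ψ * (pairMatrix ψ)ᴴ * (pairMatrix ψ * (pairMatrix ψ)ᴴ) =
      (2 * ((d : ℂ) + 1)⁻¹) • (pairMatrix ψ * (pairMatrix ψ)ᴴ) := by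
  rw [Matrix.mul_assoc, ← Matrix.mul_assoc (pairMatrix ψ)ᴴ,
    conjTranspose_pairMatrix_mul_pairMatrix_of_sic hodd hunit hsic, Matrix.smul_mul,
    Matrix.mul_smul, Matrix.add_mul, Matrix.one_mul, Matrix.mul_add,
    ← Matrix.mul_assoc _ (parityMatrix d), pairMatrix_mul_parityMatrix,
    ← two_smul ℂ (pairMatrix ψ * _), smul_smul, mul_comm]

theorem trace_pairMatrix_mul_conjTranspose_of_sic (hodd : Odd d) (hunit : cInner ψ ψ = 1)
    (hsic : ∀ p : ZMod d × ZMod d, p ≠ 0 →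
      ‖cInner ψ ((Disp d p).mulVec ψ)‖ ^ 2 = 1 / (d + 1)) :
    (pairMatrix ψ * (pairMatrix ψ)ᴴ).trace = 1 := by
  have hd : (d : ℂ) + 1 ≠ 0 := by exact_mod_cast Nat.succ_ne_zero d
  rw [trace_mul_comm, conjTranspose_pairMatrix_mul_pairMatrix_of_sic hodd hunit hsic, trace_smul,
    trace_add, trace_one, trace_parityMatrix hodd, ZMod.card, smul_eq_mul,
    inv_mul_cancel₀ hd]

theorem sqPhase_eq (hodd : Odd d) (hunit : cInner ψ ψ = 1) (q : ZMod d × ZMod d) :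
    sqPhase d ψ q = ((d : ℂ) + 1) * overlap ψ q ^ 2 - if q = 0 then (d : ℂ) else 0 := by
  rw [sqPhase]
  split_ifs with hq
  · rw [hq, overlap_zero ψ hodd, hunit]
    ring
  · rw [overlap, sub_zero]

theorem genParity_eq (hodd : Odd d) (hunit : cInner ψ ψ = 1) :
    genParity d ψ = ((d : ℂ) + 1) • (pairMatrix ψ * (pairMatrix ψ)ᴴ) - 1 := by
  have hd : (d : ℂ) ≠ 0 := Nat.cast_ne_zero.mpr (NeZero.ne d)
  simp only [genParity, sqPhase_eq hodd hunit, sub_smul, Finset.sum_sub_distrib, ← smul_smul,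
    ← Finset.smul_sum, sum_overlap_sq_smul_disp ψ hodd, hmap_eq_zero_iff hodd, ite_smul,
    zero_smul, Finset.sum_ite_eq', Finset.mem_univ, if_true, neg_zero, disp_zero hodd, smul_sub]
  rw [smul_comm _ (d : ℂ), smul_smul, smul_smul, smul_smul, inv_mul_cancel₀ hd, one_mul,
    one_smul]

theorem genParity_conjTranspose (hodd : Odd d) (hunit : cInner ψ ψ = 1) :
    (genParity d ψ)ᴴ = genParity d ψ := by
  rw [genParity_eq hodd hunit, conjTranspose_sub, conjTranspose_one, conjTranspose_smul,
    (isHermitian_mul_conjTranspose_self _).eq, star_add, star_one, star_natCast]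

theorem genParity_mul_self_of_sic (hodd : Odd d) (hunit : cInner ψ ψ = 1)
    (hsic : ∀ p : ZMod d × ZMod d, p ≠ 0 →
      ‖cInner ψ ((Disp d p).mulVec ψ)‖ ^ 2 = 1 / (d + 1)) :
    genParity d ψ * genParity d ψ = 1 := by
  have hd : (d : ℂ) + 1 ≠ 0 := by exact_mod_cast Nat.succ_ne_zero d
  rw [genParity_eq hodd hunit, sub_mul, mul_sub, mul_sub, smul_mul_smul_comm,
    pairMatrix_mul_conjTranspose_mul_self_of_sic hodd hunit hsic, smul_smul, Matrix.mul_one,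
    Matrix.one_mul, Matrix.one_mul,
    show ((d : ℂ) + 1) * ((d : ℂ) + 1) * (2 * ((d : ℂ) + 1)⁻¹) = 2 * ((d : ℂ) + 1) by
      field_simp]
  module

theorem trace_genParity_of_sic (hodd : Odd d) (hunit : cInner ψ ψ = 1)
    (hsic : ∀ p : ZMod d × ZMod d, p ≠ 0 →
      ‖cInner ψ ((Disp d p).mulVec ψ)‖ ^ 2 = 1 / (d + 1)) :
    (genParity d ψ).trace = 1 := by
  rw [genParity_eq hodd hunit, trace_sub, trace_smul,
    trace_pairMatrix_mul_conjTranspose_of_sic hodd hunit hsic, trace_one, ZMod.card, smul_eq_mul]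
  ring

theorem genParity_hermitian_involution_general
    (d : ℕ) [NeZero d] (hodd : Odd d)
    (ψ₀ : ZMod d → ℂ)
    (hunit : cInner ψ₀ ψ₀ = 1)
    (hsic : ∀ p : ZMod d × ZMod d, p ≠ 0 →
      ‖cInner ψ₀ ((Disp d p).mulVec ψ₀)‖ ^ 2 = 1 / (d + 1)) :
    (genParity d ψ₀)ᴴ = genParity d ψ₀ ∧
    genParity d ψ₀ * genParity d ψ₀ = 1 ∧
    (genParity d ψ₀).trace = 1 ∧
    Module.finrank ℂ
      (Module.End.eigenspace (Matrix.toLin' (genParity d ψ₀)) 1) = (d + 1) / 2 ∧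
    Module.finrank ℂ
      (Module.End.eigenspace (Matrix.toLin' (genParity d ψ₀)) (-1)) = (d - 1) / 2 := by
  have hsq := genParity_mul_self_of_sic hodd hunit hsic
  have htr := trace_genParity_of_sic hodd hunit hsic
  have hinv : toLin' (genParity d ψ₀) * toLin' (genParity d ψ₀) = 1 := by
    rw [Module.End.mul_eq_comp, ← toLin'_mul, hsq, toLin'_one, Module.End.one_eq_id]
  have hsum := Module.End.finrank_eigenspace_one_add_finrank_eigenspace_neg_one two_ne_zero hinv
  have htwice := Module.End.two_mul_finrank_eigenspace_one two_ne_zero hinv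
  rw [Module.finrank_fintype_fun_eq_card, ZMod.card] at hsum htwice
  rw [trace_toLin'_eq, htr] at htwice
  have hplus :
      2 * Module.finrank ℂ (Module.End.eigenspace (toLin' (genParity d ψ₀)) 1) = d + 1 := by
    exact_mod_cast htwice
  exact ⟨genParity_conjTranspose hodd hunit, hsq, htr, by omega, by omega⟩

/-- For a SIC fiducial `ψ₀` in odd dimension `d`, the generalised parity
operator `P_θ` is Hermitian, squares to the identity, and has trace `1`;
its `+1` eigenspace has dimension `(d+1)/2` and its `-1` eigenspace has
dimension `(d-1)/2`. -/
theorem genParity_hermitian_involution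
    (d : ℕ) [NeZero d] (hodd : Odd d) (hd : 3 ≤ d)
    (ψ₀ : ZMod d → ℂ)
    (hunit : cInner ψ₀ ψ₀ = 1)
    (hsic : ∀ p : ZMod d × ZMod d, p ≠ 0 →
      ‖cInner ψ₀ ((Disp d p).mulVec ψ₀)‖ ^ 2 = 1 / (d + 1)) :
    (genParity d ψ₀)ᴴ = genParity d ψ₀ ∧
    genParity d ψ₀ * genParity d ψ₀ = 1 ∧
    (genParity d ψ₀).trace = 1 ∧
    Module.finrank ℂ
      (Module.End.eigenspace (Matrix.toLin' (genParity d ψ₀)) 1) = (d + 1) / 2 ∧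
    Module.finrank ℂ
      (Module.End.eigenspace (Matrix.toLin' (genParity d ψ₀)) (-1)) = (d - 1) / 2 :=
  genParity_hermitian_involution_general d hodd ψ₀ hunit hsic
end

section
/- Let F = [[α,β],[γ,δ]] be a matrix over ℤ/dℤ with αδ − βγ = 1 and with β invertible in ℤ/dℤ. Define the d×d matrix U_F with entries (U_F)_{r,s} = (1/√d)·τ^{β^{−1}(δr² − 2rs + αs²)} for r, s ∈ ℤ/dℤ. Then U_F is unitary and U_F D_p U_F† = D_{Fp} for all p ∈ (ℤ/dℤ)², i.e. U_F is a symplectic (Clifford) unitary implementing F on the displacement operators. -/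
/-!
The entries of `U_F` are values of the additive character `x ↦ τ^{x.val}` of `ℤ/dℤ`, which is
primitive because `τ = exp(2πi (k+1)/d)` is a primitive `d`-th root of unity for `d = 2k+1`.
The phase `β⁻¹(δr² - 2rs + αs²)` has the invertible cross coefficient `-2β⁻¹`, so
`(U_F U_F†)_{r,r'}` is a multiple of a character sum over `s` that vanishes unless `r = r'`.
Covariance is the identity `U_F D_p = D_{Fp} U_F`: every entry of either side has a single
nonzero term, and their phases agree by a polynomial identity modulo `αδ - βγ = 1`.
-/

open Matrix Complex

/-- The symplectic (Weyl) unitary associated to `F = [[α,β],[γ,δ]]` with `β`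
invertible: `(U_F)_{r,s} = (1/√d)·τ^{β⁻¹(δr² - 2rs + αs²)}`. -/
noncomputable def sympU (d : ℕ) [NeZero d] (α β γ δ : ZMod d) :
    Matrix (ZMod d) (ZMod d) ℂ :=
  Matrix.of fun r s =>
    (1 / Real.sqrt d : ℂ) * tau d ^ ((β⁻¹ * (δ * r ^ 2 - 2 * r * s + α * s ^ 2)).val)

open Finset

lemma isPrimitiveRoot_tau {d : ℕ} (hodd : Odd d) : IsPrimitiveRoot (tau d) d := by
  obtain ⟨k, rfl⟩ := hodd
  have hd : 2 * k + 1 ≠ 0 := (2 * k).succ_ne_zero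
  have hexp : tau (2 * k + 1) = exp (2 * Real.pi * I * ((k + 1 : ℕ) / (2 * k + 1 : ℕ))) := by
    have : ((2 * k + 1 : ℕ) : ℂ) ≠ 0 := Nat.cast_ne_zero.mpr hd
    rw [tau, ← neg_one_mul, ← exp_pi_mul_I, ← exp_add]
    congr 1
    field_simp
    push_cast
    ring
  have hcop : (k + 1).Coprime (2 * k + 1) := by
    rw [show 2 * k + 1 = k + (k + 1) by ring, Nat.coprime_add_self_right,
      Nat.coprime_self_add_left]
    exact Nat.coprime_one_left k
  rw [hexp]
  exact isPrimitiveRoot_exp_of_coprime _ _ hd hcop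

noncomputable def tauChar {d : ℕ} [NeZero d] (hodd : Odd d) : AddChar (ZMod d) ℂ :=
  AddChar.zmodChar d (isPrimitiveRoot_tau hodd).pow_eq_one

lemma tauChar_apply {d : ℕ} [NeZero d] (hodd : Odd d) (x : ZMod d) :
    tauChar hodd x = tau d ^ x.val :=
  rfl

lemma isPrimitive_tauChar {d : ℕ} [NeZero d] (hodd : Odd d) : (tauChar hodd).IsPrimitive :=
  AddChar.zmodChar_primitive_of_primitive_root d (isPrimitiveRoot_tau hodd)

lemma mul_conjTranspose_eq_card_smul_one_of_phase {R : Type*} [CommRing R] [Fintype R]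
    [DecidableEq R] {ψ : AddChar R ℂ} (hψ : ψ.IsPrimitive) {b : R} (hb : IsUnit b)
    (f g : R → R) (M : Matrix R R ℂ) (hM : ∀ r s, M r s = ψ (f r + b * r * s + g s)) :
    M * Mᴴ = (Fintype.card R : ℂ) • 1 := by
  ext r r'
  have hphase : ∀ s, f r + b * r * s + g s + -(f r' + b * r' * s + g s)
      = (f r - f r') + s * (b * (r - r')) := fun s => by ring
  simp_rw [mul_apply, conjTranspose_apply, hM, RCLike.star_def, ← AddChar.map_neg_eq_conj,
    ← AddChar.map_add_eq_mul, hphase, AddChar.map_add_eq_mul, ← mul_sum,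
    AddChar.sum_mulShift _ hψ, hb.mul_right_eq_zero, sub_eq_zero, Matrix.smul_apply, one_apply]
  split_ifs with h
  · simp [h]
  · simp

lemma mul_Disp_apply {d : ℕ} [NeZero d] (M : Matrix (ZMod d) (ZMod d) ℂ)
    (p : ZMod d × ZMod d) (r s : ZMod d) :
    (M * Disp d p) r s = M r (s + p.1) * tau d ^ (p.1 * p.2 + 2 * p.2 * s).val := by
  simp [mul_apply, Disp]

lemma Disp_mul_apply {d : ℕ} [NeZero d] (M : Matrix (ZMod d) (ZMod d) ℂ)
    (p : ZMod d × ZMod d) (r s : ZMod d) :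
    (Disp d p * M) r s = tau d ^ (p.1 * p.2 + 2 * p.2 * (r - p.1)).val * M (r - p.1) s := by
  simp [mul_apply, Disp, ← sub_eq_iff_eq_add]

lemma sympU_mul_conjTranspose {d : ℕ} [NeZero d] (hodd : Odd d) {α β γ δ : ZMod d}
    (hβ : IsUnit β) : sympU d α β γ δ * (sympU d α β γ δ)ᴴ = 1 := by
  set c : ℂ := 1 / Real.sqrt d
  set M : Matrix (ZMod d) (ZMod d) ℂ :=
    of fun r s => tauChar hodd (β⁻¹ * (δ * r ^ 2 - 2 * r * s + α * s ^ 2))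
  have hU : sympU d α β γ δ = c • M := rfl
  have h2 : IsUnit (2 : ZMod d) := by
    simpa using (ZMod.isUnit_iff_coprime 2 d).mpr (Nat.coprime_two_left.mpr hodd)
  have hβinv : IsUnit β⁻¹ := IsUnit.of_mul_eq_one_right β (ZMod.mul_inv_of_unit β hβ)
  have hMM : M * Mᴴ = (d : ℂ) • 1 := by
    simpa using mul_conjTranspose_eq_card_smul_one_of_phase (isPrimitive_tauChar hodd)
      (h2.neg.mul hβinv) (fun r => β⁻¹ * δ * r ^ 2) (fun s => β⁻¹ * α * s ^ 2) M
      (fun r s => by simp only [M, of_apply]; ring_nf)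
  have hc : c * star c * d = 1 := by
    have hd : (0 : ℝ) < d := by exact_mod_cast Nat.pos_of_neZero d
    have hsq : (Real.sqrt d : ℂ) ^ 2 = d := by exact_mod_cast Real.sq_sqrt hd.le
    have h0 : (Real.sqrt d : ℂ) ≠ 0 := by exact_mod_cast (Real.sqrt_pos.mpr hd).ne'
    simp only [c, star_div₀, star_one, Complex.star_def, Complex.conj_ofReal]
    field_simp
    exact hsq.symm
  rw [hU, conjTranspose_smul, smul_mul_smul_comm, hMM, smul_smul, hc, one_smul]

lemma symplectic_phase_shift {R : Type*} [CommRing R] {α β γ δ β' : R}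
    (hdet : α * δ - β * γ = 1) (hβ : β * β' = 1) (i j r s : R) :
    β' * (δ * r ^ 2 - 2 * r * (s + i) + α * (s + i) ^ 2) + (i * j + 2 * j * s)
      = ((α * i + β * j) * (γ * i + δ * j) + 2 * (γ * i + δ * j) * (r - (α * i + β * j)))
        + β' * (δ * (r - (α * i + β * j)) ^ 2 - 2 * (r - (α * i + β * j)) * s + α * s ^ 2) := by
  linear_combination (-2 * j * s + r * (2 * γ * i + 2 * δ * j) - α * γ * i ^ 2
    - 2 * α * δ * i * j - β * δ * j ^ 2) * hβ + (2 * β' * i * r - β' * α * i ^ 2 - i * j) * hdet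

lemma sympU_mul_Disp {d : ℕ} [NeZero d] (hodd : Odd d) {α β γ δ : ZMod d}
    (hdet : α * δ - β * γ = 1) (hβ : IsUnit β) (p : ZMod d × ZMod d) :
    sympU d α β γ δ * Disp d p
      = Disp d (α * p.1 + β * p.2, γ * p.1 + δ * p.2) * sympU d α β γ δ := by
  ext r s
  simp only [mul_Disp_apply, Disp_mul_apply, sympU, of_apply, ← tauChar_apply hodd]
  rw [mul_assoc, ← AddChar.map_add_eq_mul,
    symplectic_phase_shift hdet (ZMod.mul_inv_of_unit β hβ), AddChar.map_add_eq_mul]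
  ring

theorem sympU_unitary_and_covariant_general
    (d : ℕ) [NeZero d] (hodd : Odd d)
    (α β γ δ : ZMod d) (hdet : α * δ - β * γ = 1) (hβ : IsUnit β) :
    sympU d α β γ δ ∈ Matrix.unitaryGroup (ZMod d) ℂ ∧
    ∀ p : ZMod d × ZMod d,
      sympU d α β γ δ * Disp d p * (sympU d α β γ δ)ᴴ
        = Disp d (α * p.1 + β * p.2, γ * p.1 + δ * p.2) := by
  have hunitary : sympU d α β γ δ * (sympU d α β γ δ)ᴴ = 1 := sympU_mul_conjTranspose hodd hβ
  refine ⟨mem_unitaryGroup_iff.mpr hunitary, fun p => ?_⟩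
  rw [sympU_mul_Disp hodd hdet hβ, mul_assoc, hunitary, mul_one]

/-- If `F = [[α,β],[γ,δ]]` over `ℤ/dℤ` has `αδ - βγ = 1` and `β` invertible,
then `U_F` is unitary and `U_F D_p U_F† = D_{Fp}` for all `p`. -/
theorem sympU_unitary_and_covariant
    (d : ℕ) [NeZero d] (hodd : Odd d) (hd : 3 ≤ d)
    (α β γ δ : ZMod d) (hdet : α * δ - β * γ = 1) (hβ : IsUnit β) :
    sympU d α β γ δ ∈ Matrix.unitaryGroup (ZMod d) ℂ ∧
    ∀ p : ZMod d × ZMod d,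
      sympU d α β γ δ * Disp d p * (sympU d α β γ δ)ᴴ
        = Disp d (α * p.1 + β * p.2, γ * p.1 + δ * p.2) :=
  sympU_unitary_and_covariant_general d hodd α β γ δ hdet hβ
end
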